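/- arXiv:2108.07589 — 2 statements merged into one kernel-verified Lean document; each statement's English description precedes it below -/
import Mathlib

section
/- Let ρ̃, q̃ ∈ ℝ^{K+1} with P(ρ̃) invertible, and set ρ(ξ) := ∑ ρ̃_i φ_i(ξ), q(ξ) := ∑ q̃_i φ_i(ξ). Suppose there exist v, s ∈ span{φ_0,…,φ_K}, say v(ξ) = ∑ ṽ_i φ_i(ξ) and s(ξ) = ∑ s̃_i φ_i(ξ), such that ρ(ξ)v(ξ) = q(ξ) and q(ξ)v(ξ) = s(ξ) for a.e. ξ ∈ Ω (so that v = q/ρ and s = q²/ρ whenever ρ ≠ 0). Then s̃ = P(q̃)P(ρ̃)^{-1}q̃; in particular the gPC coefficients of q²/ρ satisfy the closure relation ∫_Ω s(ξ) φ_i(ξ) f_Ξ(ξ) dξ = (P(q̃)P(ρ̃)^{-1}q̃)_i for all i = 0,…,K. -/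
/-!
Galerkin projection of `ρ v = q` and `q v = s` onto `φ_0, …, φ_K` turns both products into
matrix–vector products: the `i`-th coefficient of `(∑ a_ℓ φ_ℓ) (∑ b_j φ_j)` is `(P(a) b)_i`,
because orthonormality reads coefficients off as integrals against `φ_i f_Ξ`, and these
integrals of triple products are the entries of the `M_ℓ`. Hence `P(ρ̃) ṽ = q̃` and
`P(q̃) ṽ = s̃`, and eliminating `ṽ = P(ρ̃)⁻¹ q̃` gives `s̃ = P(q̃) P(ρ̃)⁻¹ q̃`.

The pair products `φ_i φ_j f_Ξ` are integrable by `2|φ_i φ_j| ≤ φ_i² + φ_j²`, since `f_Ξ ≥ 0`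
and the squares have finite integral `1`.
-/

open MeasureTheory Matrix

theorem Matrix.mul_inv_mulVec_eq_of_mulVec_eq {n R : Type*} [Fintype n] [DecidableEq n]
    [CommRing R] {A B : Matrix n n R} {q s v : n → R} (hA : IsUnit A)
    (hAv : A *ᵥ v = q) (hBv : B *ᵥ v = s) : (B * A⁻¹) *ᵥ q = s := by
  let := hA.invertible
  rw [← Matrix.mulVec_mulVec, Matrix.inv_mulVec_eq_vec hAv.symm, hBv]

namespace GPC

variable {α ι : Type*} [MeasurableSpace α] {μ : Measure α} {w : α → ℝ} {φ : ι → α → ℝ}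

/-- Since division by zero returns zero, this holds at every point; it makes the pair products
measurable without any measurability assumption on `φ` or `w`. -/
lemma mul_mul_eq_mul_div (a b c : ℝ) :
    a * b * c = a * a * b * c * (a * a * c) / (a * a * a * c) := by
  rcases eq_or_ne a 0 with rfl | ha
  · simp
  rcases eq_or_ne c 0 with rfl | hc
  · simp
  field_simp

lemma aestronglyMeasurable_mul_mul {a b : α → ℝ}
    (haab : Integrable (fun x => a x * a x * b x * w x) μ)
    (haa : Integrable (fun x => a x * a x * w x) μ)
    (haaa : Integrable (fun x => a x * a x * a x * w x) μ) :
    AEStronglyMeasurable (fun x => a x * b x * w x) μ := by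
  simp_rw [mul_mul_eq_mul_div (a _) (b _) (w _)]
  exact ((haab.aemeasurable.mul haa.aemeasurable).div haaa.aemeasurable).aestronglyMeasurable

lemma integrable_mul_mul_of_integrable_sq {a b : α → ℝ} (hw : 0 ≤ᵐ[μ] w)
    (hab : AEStronglyMeasurable (fun x => a x * b x * w x) μ)
    (ha : Integrable (fun x => a x * a x * w x) μ)
    (hb : Integrable (fun x => b x * b x * w x) μ) :
    Integrable (fun x => a x * b x * w x) μ := by
  refine ((ha.add hb).div_const 2).mono' hab ?_
  filter_upwards [hw] with x hx
  have hamgm := two_mul_le_add_sq |a x| |b x|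
  rw [sq_abs, sq_abs] at hamgm
  rw [Real.norm_eq_abs, abs_mul, abs_of_nonneg hx, abs_mul, Pi.add_apply]
  nlinarith [mul_nonneg (sub_nonneg.2 hamgm) hx]

lemma integrable_mul_mul_of_orthonormal [DecidableEq ι] (hw : 0 ≤ᵐ[μ] w)
    (horth : ∀ i j, ∫ x, φ i x * φ j x * w x ∂μ = if i = j then 1 else 0)
    (htriple : ∀ i j k, Integrable (fun x => φ i x * φ j x * φ k x * w x) μ) (i j : ι) :
    Integrable (fun x => φ i x * φ j x * w x) μ := by
  have hsq (k : ι) : Integrable (fun x => φ k x * φ k x * w x) μ :=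
    Integrable.of_integral_ne_zero (by simp [horth])
  exact integrable_mul_mul_of_integrable_sq hw
    (aestronglyMeasurable_mul_mul (htriple i i j) (hsq i) (htriple i i i)) (hsq i) (hsq j)

variable [Fintype ι]

lemma integral_sum_mul_sum_mul_mul_eq_mulVec (M : ι → Matrix ι ι ℝ)
    (htriple : ∀ i j k, Integrable (fun x => φ i x * φ j x * φ k x * w x) μ)
    (hM : ∀ k i j, M k i j = ∫ x, φ i x * φ j x * φ k x * w x ∂μ) (a b : ι → ℝ) (i : ι) :
    ∫ x, (∑ k, a k * φ k x) * (∑ j, b j * φ j x) * φ i x * w x ∂μ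
      = ((∑ k, a k • M k) *ᵥ b) i := by
  have hexpand : ∀ x, (∑ k, a k * φ k x) * (∑ j, b j * φ j x) * φ i x * w x
      = ∑ k, ∑ j, a k * b j * (φ i x * φ j x * φ k x * w x) := fun x => by
    simp only [Finset.sum_mul, Finset.mul_sum]
    rw [Finset.sum_comm]
    exact Finset.sum_congr rfl fun k _ => Finset.sum_congr rfl fun j _ => by ring
  simp_rw [hexpand]
  rw [integral_finsetSum _ fun k _ => integrable_finsetSum _ fun j _ => (htriple i j k).const_mul _]
  simp_rw [integral_finsetSum _ fun j _ => (htriple i j _).const_mul _, integral_const_mul]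
  simp only [Matrix.mulVec, dotProduct, Matrix.sum_apply, Matrix.smul_apply, smul_eq_mul, hM,
    Finset.sum_mul]
  rw [Finset.sum_comm]
  exact Finset.sum_congr rfl fun j _ => Finset.sum_congr rfl fun k _ => by ring

variable [DecidableEq ι]

lemma integral_sum_mul_mul_eq_coeff
    (horth : ∀ i j, ∫ x, φ i x * φ j x * w x ∂μ = if i = j then 1 else 0)
    (hpair : ∀ i j, Integrable (fun x => φ i x * φ j x * w x) μ) (c : ι → ℝ) (i : ι) :
    ∫ x, (∑ j, c j * φ j x) * φ i x * w x ∂μ = c i := by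
  simp_rw [Finset.sum_mul, mul_assoc]
  rw [integral_finsetSum _ fun j _ => by simpa only [mul_assoc] using (hpair j i).const_mul (c j)]
  simp_rw [integral_const_mul, ← mul_assoc, horth]
  simp

lemma mulVec_eq_of_ae_mul_eq (M : ι → Matrix ι ι ℝ)
    (horth : ∀ i j, ∫ x, φ i x * φ j x * w x ∂μ = if i = j then 1 else 0)
    (hpair : ∀ i j, Integrable (fun x => φ i x * φ j x * w x) μ)
    (htriple : ∀ i j k, Integrable (fun x => φ i x * φ j x * φ k x * w x) μ)
    (hM : ∀ k i j, M k i j = ∫ x, φ i x * φ j x * φ k x * w x ∂μ) {a b c : ι → ℝ}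
    (hprod : ∀ᵐ x ∂μ, (∑ k, a k * φ k x) * (∑ j, b j * φ j x) = ∑ i, c i * φ i x) :
    (∑ k, a k • M k) *ᵥ b = c := by
  funext i
  rw [← integral_sum_mul_sum_mul_mul_eq_mulVec M htriple hM,
    ← integral_sum_mul_mul_eq_coeff horth hpair c i]
  refine integral_congr_ae ?_
  filter_upwards [hprod] with x hx
  rw [hx]

end GPC

open GPC in
theorem gpc_closure_relation_general
    (K : ℕ) (Ω : Set ℝ) (hΩ : MeasurableSet Ω)
    -- probability density f_Ξ on Ω
    (fΞ : ℝ → ℝ) (hfΞ : ∀ ξ ∈ Ω, 0 ≤ fΞ ξ)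
    -- orthonormal basis functions φ_0, …, φ_K in L²(Ω, f_Ξ dξ)
    (φ : Fin (K + 1) → ℝ → ℝ)
    (horth : ∀ i j, ∫ ξ in Ω, φ i ξ * φ j ξ * fΞ ξ = if i = j then (1 : ℝ) else 0)
    -- triple products assumed integrable; matrices M_ℓ
    (htriple : ∀ i j ℓ, IntegrableOn (fun ξ => φ i ξ * φ j ξ * φ ℓ ξ * fΞ ξ) Ω)
    (Mmat : Fin (K + 1) → Matrix (Fin (K + 1)) (Fin (K + 1)) ℝ)
    (hMmat : ∀ ℓ i j, Mmat ℓ i j = ∫ ξ in Ω, φ i ξ * φ j ξ * φ ℓ ξ * fΞ ξ)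
    -- coefficient vectors and reconstructed random variables
    (ρc qc vc sc : Fin (K + 1) → ℝ)
    (ρ q v s : ℝ → ℝ)
    (hρ : ∀ ξ, ρ ξ = ∑ i, ρc i * φ i ξ)
    (hq : ∀ ξ, q ξ = ∑ i, qc i * φ i ξ)
    (hv : ∀ ξ, v ξ = ∑ i, vc i * φ i ξ)
    (hs : ∀ ξ, s ξ = ∑ i, sc i * φ i ξ)
    -- P(ρ̃) is invertible
    (hinv : IsUnit (∑ ℓ, ρc ℓ • Mmat ℓ))
    -- ρ v = q and q v = s a.e. (so v = q/ρ and s = q²/ρ whenever ρ ≠ 0)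
    (hae : ∀ᵐ ξ ∂(volume.restrict Ω), ρ ξ * v ξ = q ξ ∧ q ξ * v ξ = s ξ) :
    sc = ((∑ ℓ, qc ℓ • Mmat ℓ) * (∑ ℓ, ρc ℓ • Mmat ℓ)⁻¹).mulVec qc
    ∧ ∀ i, ∫ ξ in Ω, s ξ * φ i ξ * fΞ ξ
        = ((∑ ℓ, qc ℓ • Mmat ℓ) * (∑ ℓ, ρc ℓ • Mmat ℓ)⁻¹).mulVec qc i := by
  obtain rfl : ρ = _ := funext hρ
  obtain rfl : q = _ := funext hq
  obtain rfl : v = _ := funext hv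
  obtain rfl : s = _ := funext hs
  have hpair := integrable_mul_mul_of_orthonormal ((ae_restrict_iff' hΩ).2 (ae_of_all _ hfΞ))
    horth htriple
  have hρv := mulVec_eq_of_ae_mul_eq Mmat horth hpair htriple hMmat (hae.mono fun _ h => h.1)
  have hqv := mulVec_eq_of_ae_mul_eq Mmat horth hpair htriple hMmat (hae.mono fun _ h => h.2)
  have hsc := Matrix.mul_inv_mulVec_eq_of_mulVec_eq hinv hρv hqv
  exact ⟨hsc.symm, fun i => hsc ▸ integral_sum_mul_mul_eq_coeff horth hpair sc i⟩

/-- the closure relation for `q²/ρ`: if `ρ v = q` and `q v = s`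
pointwise a.e. with `v, s` in the span of the basis, then the gPC coefficients
of `s = q²/ρ` are given by `s̃ = P(q̃) P(ρ̃)⁻¹ q̃`. -/
theorem gpc_closure_relation
    (K : ℕ) (Ω : Set ℝ) (hΩ : MeasurableSet Ω)
    -- probability density f_Ξ on Ω
    (fΞ : ℝ → ℝ) (hfΞ : ∀ ξ ∈ Ω, 0 ≤ fΞ ξ) (hprob : ∫ ξ in Ω, fΞ ξ = 1)
    -- orthonormal basis functions φ_0, …, φ_K in L²(Ω, f_Ξ dξ)
    (φ : Fin (K + 1) → ℝ → ℝ)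
    (horth : ∀ i j, ∫ ξ in Ω, φ i ξ * φ j ξ * fΞ ξ = if i = j then (1 : ℝ) else 0)
    -- triple products assumed integrable; matrices M_ℓ
    (htriple : ∀ i j ℓ, IntegrableOn (fun ξ => φ i ξ * φ j ξ * φ ℓ ξ * fΞ ξ) Ω)
    (Mmat : Fin (K + 1) → Matrix (Fin (K + 1)) (Fin (K + 1)) ℝ)
    (hMmat : ∀ ℓ i j, Mmat ℓ i j = ∫ ξ in Ω, φ i ξ * φ j ξ * φ ℓ ξ * fΞ ξ)
    -- coefficient vectors and reconstructed random variables
    (ρc qc vc sc : Fin (K + 1) → ℝ)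
    (ρ q v s : ℝ → ℝ)
    (hρ : ∀ ξ, ρ ξ = ∑ i, ρc i * φ i ξ)
    (hq : ∀ ξ, q ξ = ∑ i, qc i * φ i ξ)
    (hv : ∀ ξ, v ξ = ∑ i, vc i * φ i ξ)
    (hs : ∀ ξ, s ξ = ∑ i, sc i * φ i ξ)
    -- P(ρ̃) is invertible
    (hinv : IsUnit (∑ ℓ, ρc ℓ • Mmat ℓ))
    -- ρ v = q and q v = s a.e. (so v = q/ρ and s = q²/ρ whenever ρ ≠ 0)
    (hae : ∀ᵐ ξ ∂(volume.restrict Ω), ρ ξ * v ξ = q ξ ∧ q ξ * v ξ = s ξ) :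
    sc = ((∑ ℓ, qc ℓ • Mmat ℓ) * (∑ ℓ, ρc ℓ • Mmat ℓ)⁻¹).mulVec qc
    ∧ ∀ i, ∫ ξ in Ω, s ξ * φ i ξ * fΞ ξ
        = ((∑ ℓ, qc ℓ • Mmat ℓ) * (∑ ℓ, ρc ℓ • Mmat ℓ)⁻¹).mulVec qc i :=
  gpc_closure_relation_general K Ω hΩ fΞ hfΞ φ horth htriple Mmat hMmat ρc qc vc sc ρ q v s hρ hq hv
    hs hinv hae
end

section
/- Let ρ̃, q̃ ∈ C¹([0,∞) × ℝ; ℝ^{K+1}) and define the random fields ρ(t,x,ξ) := ∑_{i=0}^K ρ̃_i(t,x)φ_i(ξ) and q(t,x,ξ) := ∑_{i=0}^K q̃_i(t,x)φ_i(ξ). Assume: (i) for a.e. ξ ∈ Ω the pair (ρ,q)(·,·,ξ) satisfies pointwise the Aw–Rascle–Zhang system with hesitation h(ρ)=ρ: ∂_t ρ + ∂_x(q − ρ²) = 0 and ∂_t q + ∂_x(q²/ρ − qρ) = (1/ε)(ρ V_eq(ρ) + ρ² − q), with ρ(t,x,ξ) ≠ 0; (ii) for every (t,x) the functions ξ ↦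 ρ², ρq, q/ρ, q²/ρ, and V_eq(ρ) all lie in span{φ_0,…,φ_K}, with V_eq(ρ(t,x,ξ)) = ∑_ℓ Ṽ_ℓ(t,x)φ_ℓ(ξ); (iii) P(ρ̃(t,x)) is invertible for all (t,x). Then the coefficient functions satisfy the stochastic-Galerkin Aw–Rascle–Zhang system: for every i, ∂_t ρ̃_i + ∂_x[q̃_i − (P(ρ̃)ρ̃)_i] = 0 and ∂_t q̃_i + ∂_x[(P(q̃)P(ρ̃)^{-1}q̃)_i − (P(ρ̃)q̃)_i] = (1/ε)[(P(Ṽ)ρ̃)_i + (P(ρ̃)ρ̃)_i − q̃_i]. -/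
/-!
Expanding the random fields in the gPC basis turns each flux of the random Aw–Rascle–Zhang system
into a gPC expansion whose coefficients are Galerkin products: testing `h * g` against `φᵢ` gives
`(P(c) u)ᵢ` when `h`, `g` have coefficients `u`, `c`, by the definition of the triple-product
matrices. Writing `q = ρ · (q/ρ)`, `q²/ρ = (q/ρ) · q` and `ρq = q · ρ` identifies the coefficients
of the momentum flux as `P(q̃) P(ρ̃)⁻¹ q̃ - P(ρ̃) q̃`, and similarly those of `q - ρ²`. For a.e. `ξ`
these expansions hold for every `x` at once, by continuity in `x` and density of a countable set,
so they may be differentiated in `x`; testing the differentiated equations against `φᵢ` gives the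
stochastic-Galerkin system.
-/

open MeasureTheory Matrix

section Measurability

variable {α : Type*} [MeasurableSpace α] {μ : Measure α}

lemma monotone_sign_real : Monotone fun x : ℝ => (SignType.sign x : ℝ) := fun x y h => by
  rcases lt_trichotomy x 0 with hx | rfl | hx <;> rcases lt_trichotomy y 0 with hy | rfl | hy <;>
    simp [sign_pos, sign_neg, *] <;> linarith

lemma aemeasurable_of_sq_eq_of_sign_eq {X Y Z : α → ℝ} (hY : AEMeasurable Y μ)
    (hZ : AEMeasurable Z μ) (hsq : ∀ᵐ ξ ∂μ, X ξ ^ 2 = Y ξ)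
    (hsign : ∀ᵐ ξ ∂μ, SignType.sign (X ξ) = SignType.sign (Z ξ)) : AEMeasurable X μ := by
  refine ((monotone_sign_real.measurable.comp_aemeasurable hZ).mul hY.sqrt).congr ?_
  filter_upwards [hsq, hsign] with ξ hsqξ hsignξ
  simp only [Function.comp_apply, Pi.mul_apply, ← hsqξ, ← hsignξ, Real.sqrt_sq_eq_abs,
    sign_mul_abs]

lemma ae_forall_eq_of_continuous {X Y : Type*} [TopologicalSpace X]
    [TopologicalSpace.SeparableSpace X] [TopologicalSpace Y] [T2Space Y] {F G : X → α → Y}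
    (h : ∀ x, ∀ᵐ ξ ∂μ, F x ξ = G x ξ) (hF : ∀ᵐ ξ ∂μ, Continuous fun x => F x ξ)
    (hG : ∀ᵐ ξ ∂μ, Continuous fun x => G x ξ) : ∀ᵐ ξ ∂μ, ∀ x, F x ξ = G x ξ := by
  obtain ⟨s, hs, hdense⟩ := TopologicalSpace.exists_countable_dense X
  filter_upwards [(ae_ball_iff hs).2 fun x _ => h x, hF, hG] with ξ hξ hFξ hGξ
  exact congrFun (hFξ.ext_on hdense hGξ hξ)

end Measurability

namespace Matrix

lemma sum_smul_mulVec_apply {ι n R : Type*} [Fintype ι] [Fintype n] [Semiring R]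
    (M : ι → Matrix n n R) (c : ι → R) (u : n → R) (i : n) :
    ((∑ ℓ, c ℓ • M ℓ) *ᵥ u) i = ∑ j, ∑ ℓ, c ℓ * M ℓ i j * u j := by
  simp only [mulVec, dotProduct, sum_apply, smul_apply, smul_eq_mul, Finset.sum_mul]

variable {n 𝕜 : Type*} [NontriviallyNormedField 𝕜] {A B : 𝕜 → Matrix n n 𝕜} {x : 𝕜}

lemma differentiableAt_sum_smul_apply {ι : Type*} [Fintype ι] (M : ι → Matrix n n 𝕜)
    {u : 𝕜 → ι → 𝕜} (hu : ∀ ℓ, DifferentiableAt 𝕜 (fun y => u y ℓ) x) (i j : n) :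
    DifferentiableAt 𝕜 (fun y => (∑ ℓ, u y ℓ • M ℓ) i j) x := by
  simp only [sum_apply, smul_apply, smul_eq_mul]
  exact DifferentiableAt.fun_sum fun ℓ _ => (hu ℓ).mul_const _

variable [Fintype n]

lemma differentiableAt_mul_apply (hA : ∀ i j, DifferentiableAt 𝕜 (fun y => A y i j) x)
    (hB : ∀ i j, DifferentiableAt 𝕜 (fun y => B y i j) x) (i j : n) :
    DifferentiableAt 𝕜 (fun y => (A y * B y) i j) x := by
  simp only [mul_apply]
  exact DifferentiableAt.fun_sum fun k _ => (hA i k).mul (hB k j)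

lemma differentiableAt_mulVec_apply {v : 𝕜 → n → 𝕜}
    (hA : ∀ i j, DifferentiableAt 𝕜 (fun y => A y i j) x)
    (hv : ∀ j, DifferentiableAt 𝕜 (fun y => v y j) x) (i : n) :
    DifferentiableAt 𝕜 (fun y => (A y *ᵥ v y) i) x := by
  simp only [mulVec, dotProduct]
  exact DifferentiableAt.fun_sum fun j _ => (hA i j).mul (hv j)

variable [DecidableEq n]

lemma differentiableAt_det (hA : ∀ i j, DifferentiableAt 𝕜 (fun y => A y i j) x) :
    DifferentiableAt 𝕜 (fun y => (A y).det) x := by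
  simp only [det_apply']
  exact DifferentiableAt.fun_sum fun σ _ =>
    (DifferentiableAt.fun_finsetProd fun i _ => hA (σ i) i).const_mul _

lemma differentiableAt_adjugate_apply (hA : ∀ i j, DifferentiableAt 𝕜 (fun y => A y i j) x)
    (i j : n) : DifferentiableAt 𝕜 (fun y => (A y).adjugate i j) x := by
  simp only [adjugate_apply]
  refine differentiableAt_det fun k l => ?_
  by_cases hk : k = j <;> simp [updateRow_apply, hk, hA]

lemma differentiableAt_inv_apply (hA : ∀ i j, DifferentiableAt 𝕜 (fun y => A y i j) x)
    (hdet : IsUnit (A x).det) (i j : n) : DifferentiableAt 𝕜 (fun y => (A y)⁻¹ i j) x := by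
  simp only [inv_def, Ring.inverse_eq_inv', smul_apply, smul_eq_mul]
  exact ((differentiableAt_det hA).inv hdet.ne_zero).mul (differentiableAt_adjugate_apply hA i j)

end Matrix

section Expansion

variable {ι α : Type*} [Fintype ι] {φ : ι → α → ℝ} {w : α → ℝ}

def gpcExpansion (φ : ι → α → ℝ) (c : ι → ℝ) (ξ : α) : ℝ := ∑ ℓ, c ℓ * φ ℓ ξ

lemma gpcExpansion_add (c d : ι → ℝ) (ξ : α) :
    gpcExpansion φ (c + d) ξ = gpcExpansion φ c ξ + gpcExpansion φ d ξ := by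
  simp only [gpcExpansion, Pi.add_apply, add_mul, Finset.sum_add_distrib]

lemma gpcExpansion_sub (c d : ι → ℝ) (ξ : α) :
    gpcExpansion φ (c - d) ξ = gpcExpansion φ c ξ - gpcExpansion φ d ξ := by
  simp only [gpcExpansion, Pi.sub_apply, sub_mul, Finset.sum_sub_distrib]

lemma gpcExpansion_mul_basis (c : ι → ℝ) (i : ι) (ξ : α) :
    gpcExpansion φ c ξ * φ i ξ * w ξ = ∑ ℓ, c ℓ * (φ ℓ ξ * φ i ξ * w ξ) := by
  simp only [gpcExpansion, Finset.sum_mul]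
  exact Finset.sum_congr rfl fun ℓ _ => by ring

lemma gpcExpansion_mul_gpcExpansion_mul_basis (u c : ι → ℝ) (i : ι) (ξ : α) :
    gpcExpansion φ u ξ * gpcExpansion φ c ξ * φ i ξ * w ξ
      = ∑ j, ∑ ℓ, u j * c ℓ * (φ i ξ * φ j ξ * φ ℓ ξ * w ξ) := by
  rw [gpcExpansion, gpcExpansion, Finset.sum_mul_sum, Finset.sum_mul, Finset.sum_mul]
  refine Finset.sum_congr rfl fun j _ => ?_
  rw [Finset.sum_mul, Finset.sum_mul]
  exact Finset.sum_congr rfl fun ℓ _ => by ring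

lemma continuous_gpcExpansion {X : Type*} [TopologicalSpace X] {c : X → ι → ℝ}
    (hc : ∀ ℓ, Continuous fun y => c y ℓ) (ξ : α) :
    Continuous fun y => gpcExpansion φ (c y) ξ :=
  continuous_finsetSum _ fun ℓ _ => (hc ℓ).mul continuous_const

lemma deriv_gpcExpansion {c : ℝ → ι → ℝ} {x : ℝ}
    (hc : ∀ ℓ, DifferentiableAt ℝ (fun y => c y ℓ) x) (ξ : α) :
    deriv (fun y => gpcExpansion φ (c y) ξ) x
      = gpcExpansion φ (fun ℓ => deriv (fun y => c y ℓ) x) ξ :=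
  (HasDerivAt.fun_sum fun ℓ _ => (hc ℓ).hasDerivAt.mul_const (φ ℓ ξ)).deriv

end Expansion

section StochasticGalerkinFlux

variable {ι : Type*} [Fintype ι] (M : ι → Matrix ι ι ℝ)

def sgMassFlux (R Q : ι → ℝ) : ι → ℝ := Q - (∑ ℓ, R ℓ • M ℓ) *ᵥ R

noncomputable def sgMomentumFlux [DecidableEq ι] (R Q : ι → ℝ) : ι → ℝ :=
  ((∑ ℓ, Q ℓ • M ℓ) * (∑ ℓ, R ℓ • M ℓ)⁻¹) *ᵥ Q - (∑ ℓ, R ℓ • M ℓ) *ᵥ Q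

variable {R Q : ℝ → ι → ℝ} {x : ℝ}

lemma differentiableAt_sgMassFlux (hR : ∀ ℓ, DifferentiableAt ℝ (fun y => R y ℓ) x)
    (hQ : ∀ ℓ, DifferentiableAt ℝ (fun y => Q y ℓ) x) (i : ι) :
    DifferentiableAt ℝ (fun y => sgMassFlux M (R y) (Q y) i) x :=
  (hQ i).sub (differentiableAt_mulVec_apply (differentiableAt_sum_smul_apply M hR) hR i)

lemma differentiableAt_sgMomentumFlux [DecidableEq ι]
    (hR : ∀ ℓ, DifferentiableAt ℝ (fun y => R y ℓ) x)
    (hQ : ∀ ℓ, DifferentiableAt ℝ (fun y => Q y ℓ) x) (hP : IsUnit (∑ ℓ, R x ℓ • M ℓ)) (i : ι) :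
    DifferentiableAt ℝ (fun y => sgMomentumFlux M (R y) (Q y) i) x :=
  (differentiableAt_mulVec_apply (differentiableAt_mul_apply (differentiableAt_sum_smul_apply M hQ)
    (differentiableAt_inv_apply (differentiableAt_sum_smul_apply M hR)
      ((isUnit_iff_isUnit_det _).1 hP))) hQ i).sub
    (differentiableAt_mulVec_apply (differentiableAt_sum_smul_apply M hR) hQ i)

end StochasticGalerkinFlux

section Galerkin

variable {ι α : Type*} [MeasurableSpace α] {μ : Measure α} {w : α → ℝ} {φ : ι → α → ℝ}

structure IsGPCBasis [DecidableEq ι] (μ : Measure α) (w : α → ℝ) (φ : ι → α → ℝ) : Prop where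
  nonneg : 0 ≤ᵐ[μ] w
  orthonormal : ∀ i j, ∫ ξ, φ i ξ * φ j ξ * w ξ ∂μ = if i = j then 1 else 0
  integrable_triple : ∀ i j ℓ, Integrable (fun ξ => φ i ξ * φ j ξ * φ ℓ ξ * w ξ) μ

lemma IsGPCBasis.integrable_mul_self [DecidableEq ι] (hφ : IsGPCBasis μ w φ) (i : ι) :
    Integrable (fun ξ => φ i ξ * φ i ξ * w ξ) μ :=
  Integrable.of_integral_ne_zero (by simp [hφ.orthonormal i i])

-- The square of `φᵢφⱼw` is `(φᵢ²w)(φⱼ²w)` and its sign is that of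
-- `(φᵢ²φⱼw)(φᵢφⱼ²w) = φᵢφⱼw · (φᵢφⱼ)²w`, both products of integrable functions.
lemma IsGPCBasis.aemeasurable_mul [DecidableEq ι] (hφ : IsGPCBasis μ w φ) (i j : ι) :
    AEMeasurable (fun ξ => φ i ξ * φ j ξ * w ξ) μ := by
  refine aemeasurable_of_sq_eq_of_sign_eq
    ((hφ.integrable_mul_self i).aemeasurable.mul (hφ.integrable_mul_self j).aemeasurable)
    ((hφ.integrable_triple i i j).aemeasurable.mul (hφ.integrable_triple i j j).aemeasurable)
    (ae_of_all _ fun ξ => by simp only [Pi.mul_apply]; ring) ?_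
  filter_upwards [hφ.nonneg] with ξ hwξ
  have hwξ : 0 ≤ w ξ := hwξ
  have hprod : φ i ξ * φ i ξ * φ j ξ * w ξ * (φ i ξ * φ j ξ * φ j ξ * w ξ)
      = φ i ξ * φ j ξ * w ξ * ((φ i ξ * φ j ξ) ^ 2 * w ξ) := by ring
  rw [Pi.mul_apply, hprod]
  rcases (mul_nonneg (sq_nonneg (φ i ξ * φ j ξ)) hwξ).lt_or_eq with hpos | hzero
  · rw [sign_mul (φ i ξ * φ j ξ * w ξ), sign_pos hpos, mul_one]
  · rw [← hzero, mul_zero]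
    rcases mul_eq_zero.1 hzero.symm with h | h
    · simp [pow_eq_zero_iff two_ne_zero |>.1 h]
    · simp [h]

lemma IsGPCBasis.integrable_mul [DecidableEq ι] (hφ : IsGPCBasis μ w φ) (i j : ι) :
    Integrable (fun ξ => φ i ξ * φ j ξ * w ξ) μ := by
  refine ((hφ.integrable_mul_self i).add (hφ.integrable_mul_self j)).mono'
    (hφ.aemeasurable_mul i j).aestronglyMeasurable ?_
  filter_upwards [hφ.nonneg] with ξ hwξ
  have hwξ : 0 ≤ w ξ := hwξ
  rw [Pi.add_apply, Real.norm_eq_abs, abs_mul, abs_mul, abs_of_nonneg hwξ, ← add_mul]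
  refine mul_le_mul_of_nonneg_right ?_ hwξ
  nlinarith [two_mul_le_add_sq |φ i ξ| |φ j ξ|, sq_abs (φ i ξ), sq_abs (φ j ξ),
    abs_nonneg (φ i ξ), abs_nonneg (φ j ξ)]

noncomputable def gpcCoeff (μ : Measure α) (w : α → ℝ) (φ : ι → α → ℝ) (g : α → ℝ) (i : ι) :
    ℝ :=
  ∫ ξ, g ξ * φ i ξ * w ξ ∂μ

lemma gpcCoeff_const_mul (a : ℝ) (g : α → ℝ) (i : ι) :
    gpcCoeff μ w φ (fun ξ => a * g ξ) i = a * gpcCoeff μ w φ g i := by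
  simp only [gpcCoeff, mul_assoc, integral_const_mul]

variable [Fintype ι] {g h : α → ℝ} {u c : ι → ℝ} {M : ι → Matrix ι ι ℝ}

lemma integrable_mul_basis_of_ae_eq [DecidableEq ι] (hφ : IsGPCBasis μ w φ)
    (hg : g =ᵐ[μ] gpcExpansion φ c) (i : ι) : Integrable (fun ξ => g ξ * φ i ξ * w ξ) μ := by
  have hsum : Integrable (fun ξ => ∑ ℓ, c ℓ * (φ ℓ ξ * φ i ξ * w ξ)) μ :=
    integrable_finsetSum _ fun ℓ _ => (hφ.integrable_mul ℓ i).const_mul (c ℓ)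
  refine hsum.congr ?_
  filter_upwards [hg] with ξ hgξ
  rw [hgξ, gpcExpansion_mul_basis]

lemma gpcCoeff_of_ae_eq [DecidableEq ι] (hφ : IsGPCBasis μ w φ)
    (hg : g =ᵐ[μ] gpcExpansion φ c) : gpcCoeff μ w φ g = c := by
  funext i
  calc gpcCoeff μ w φ g i = ∫ ξ, ∑ ℓ, c ℓ * (φ ℓ ξ * φ i ξ * w ξ) ∂μ := by
        refine integral_congr_ae ?_
        filter_upwards [hg] with ξ hgξ
        rw [hgξ, gpcExpansion_mul_basis]
    _ = c i := by
        simp [integral_finsetSum _ fun ℓ _ => (hφ.integrable_mul ℓ i).const_mul (c ℓ),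
          integral_const_mul, hφ.orthonormal]

lemma integrable_mul_mul_basis_of_ae_eq
    (htriple : ∀ i j ℓ, Integrable (fun ξ => φ i ξ * φ j ξ * φ ℓ ξ * w ξ) μ)
    (hh : h =ᵐ[μ] gpcExpansion φ u) (hg : g =ᵐ[μ] gpcExpansion φ c) (i : ι) :
    Integrable (fun ξ => h ξ * g ξ * φ i ξ * w ξ) μ := by
  have hsum : Integrable (fun ξ => ∑ j, ∑ ℓ, u j * c ℓ * (φ i ξ * φ j ξ * φ ℓ ξ * w ξ)) μ :=
    integrable_finsetSum _ fun j _ => integrable_finsetSum _ fun ℓ _ =>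
      (htriple i j ℓ).const_mul (u j * c ℓ)
  refine hsum.congr ?_
  filter_upwards [hh, hg] with ξ hhξ hgξ
  rw [hhξ, hgξ, gpcExpansion_mul_gpcExpansion_mul_basis]

lemma gpcCoeff_mul_of_ae_eq
    (htriple : ∀ i j ℓ, Integrable (fun ξ => φ i ξ * φ j ξ * φ ℓ ξ * w ξ) μ)
    (hM : ∀ ℓ i j, M ℓ i j = ∫ ξ, φ i ξ * φ j ξ * φ ℓ ξ * w ξ ∂μ)
    (hh : h =ᵐ[μ] gpcExpansion φ u) (hg : g =ᵐ[μ] gpcExpansion φ c) (i : ι) :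
    gpcCoeff μ w φ (fun ξ => h ξ * g ξ) i = ((∑ ℓ, c ℓ • M ℓ) *ᵥ u) i := by
  calc gpcCoeff μ w φ (fun ξ => h ξ * g ξ) i
        = ∫ ξ, ∑ j, ∑ ℓ, u j * c ℓ * (φ i ξ * φ j ξ * φ ℓ ξ * w ξ) ∂μ := by
        refine integral_congr_ae ?_
        filter_upwards [hh, hg] with ξ hhξ hgξ
        rw [hhξ, hgξ, gpcExpansion_mul_gpcExpansion_mul_basis]
    _ = ((∑ ℓ, c ℓ • M ℓ) *ᵥ u) i := by
        rw [sum_smul_mulVec_apply, integral_finsetSum _ fun j _ => integrable_finsetSum _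
          fun ℓ _ => (htriple i j ℓ).const_mul _]
        refine Finset.sum_congr rfl fun j _ => ?_
        rw [integral_finsetSum _ fun ℓ _ => (htriple i j ℓ).const_mul _]
        refine Finset.sum_congr rfl fun ℓ _ => ?_
        rw [integral_const_mul, hM]
        ring

variable [DecidableEq ι] {ρ q : α → ℝ} {R Q : ι → ℝ}

lemma eq_mulVec_of_ae_eq_mul (hφ : IsGPCBasis μ w φ)
    (hM : ∀ ℓ i j, M ℓ i j = ∫ ξ, φ i ξ * φ j ξ * φ ℓ ξ * w ξ ∂μ) {d : ι → ℝ}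
    (hh : h =ᵐ[μ] gpcExpansion φ u) (hg : g =ᵐ[μ] gpcExpansion φ c)
    (hd : (fun ξ => h ξ * g ξ) =ᵐ[μ] gpcExpansion φ d) : d = (∑ ℓ, c ℓ • M ℓ) *ᵥ u := by
  funext i
  rw [← gpcCoeff_of_ae_eq hφ hd, gpcCoeff_mul_of_ae_eq hφ.integrable_triple hM hh hg]

lemma ae_eq_gpcExpansion_sgMassFlux (hφ : IsGPCBasis μ w φ)
    (hM : ∀ ℓ i j, M ℓ i j = ∫ ξ, φ i ξ * φ j ξ * φ ℓ ξ * w ξ ∂μ) {a : ι → ℝ}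
    (hρ : ρ =ᵐ[μ] gpcExpansion φ R) (hq : q =ᵐ[μ] gpcExpansion φ Q)
    (hsq : (fun ξ => ρ ξ ^ 2) =ᵐ[μ] gpcExpansion φ a) :
    (fun ξ => q ξ - ρ ξ ^ 2) =ᵐ[μ] gpcExpansion φ (sgMassFlux M R Q) := by
  have ha : a = (∑ ℓ, R ℓ • M ℓ) *ᵥ R :=
    eq_mulVec_of_ae_eq_mul hφ hM hρ hρ (by simpa only [sq] using hsq)
  filter_upwards [hq, hsq] with ξ hqξ hsqξ
  rw [sgMassFlux, gpcExpansion_sub, ← ha, hqξ, hsqξ]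

lemma ae_eq_gpcExpansion_sgMomentumFlux (hφ : IsGPCBasis μ w φ)
    (hM : ∀ ℓ i j, M ℓ i j = ∫ ξ, φ i ξ * φ j ξ * φ ℓ ξ * w ξ ∂μ) {b d : ι → ℝ}
    (hρ : ρ =ᵐ[μ] gpcExpansion φ R) (hq : q =ᵐ[μ] gpcExpansion φ Q) (hne : ∀ᵐ ξ ∂μ, ρ ξ ≠ 0)
    (hP : IsUnit (∑ ℓ, R ℓ • M ℓ)) (hb : (fun ξ => ρ ξ * q ξ) =ᵐ[μ] gpcExpansion φ b)
    (hc : (fun ξ => q ξ / ρ ξ) =ᵐ[μ] gpcExpansion φ c)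
    (hd : (fun ξ => q ξ ^ 2 / ρ ξ) =ᵐ[μ] gpcExpansion φ d) :
    (fun ξ => q ξ ^ 2 / ρ ξ - q ξ * ρ ξ) =ᵐ[μ] gpcExpansion φ (sgMomentumFlux M R Q) := by
  have hQ : Q = (∑ ℓ, R ℓ • M ℓ) *ᵥ c := by
    refine eq_mulVec_of_ae_eq_mul hφ hM hc hρ ?_
    filter_upwards [hne, hq] with ξ hneξ hqξ
    rw [div_mul_cancel₀ _ hneξ, hqξ]
  have hc' : c = (∑ ℓ, R ℓ • M ℓ)⁻¹ *ᵥ Q := by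
    rw [hQ, mulVec_mulVec, nonsing_inv_mul _ ((isUnit_iff_isUnit_det _).1 hP), one_mulVec]
  have hd' : d = (∑ ℓ, Q ℓ • M ℓ) *ᵥ c := by
    refine eq_mulVec_of_ae_eq_mul hφ hM hc hq ?_
    filter_upwards [hd] with ξ hdξ
    rw [← hdξ]
    ring
  have hb' : b = (∑ ℓ, R ℓ • M ℓ) *ᵥ Q := by
    refine eq_mulVec_of_ae_eq_mul hφ hM hq hρ ?_
    filter_upwards [hb] with ξ hbξ
    rw [← hbξ, mul_comm]
  filter_upwards [hb, hd] with ξ hbξ hdξ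
  rw [sgMomentumFlux, gpcExpansion_sub, ← mulVec_mulVec, ← hc', ← hd', ← hb', ← hdξ, ← hbξ,
    mul_comm]

lemma ae_forall_eq_gpcExpansion_sgMassFlux (hφ : IsGPCBasis μ w φ)
    (hM : ∀ ℓ i j, M ℓ i j = ∫ ξ, φ i ξ * φ j ξ * φ ℓ ξ * w ξ ∂μ) {ρ q : ℝ → α → ℝ}
    {R Q : ℝ → ι → ℝ} (hρ : ∀ y, ρ y = gpcExpansion φ (R y))
    (hq : ∀ y, q y = gpcExpansion φ (Q y)) (hR : ∀ ℓ, Differentiable ℝ fun y => R y ℓ)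
    (hQ : ∀ ℓ, Differentiable ℝ fun y => Q y ℓ)
    (hsq : ∀ y, ∃ a, (fun ξ => ρ y ξ ^ 2) =ᵐ[μ] gpcExpansion φ a) :
    ∀ᵐ ξ ∂μ, ∀ y, q y ξ - ρ y ξ ^ 2 = gpcExpansion φ (sgMassFlux M (R y) (Q y)) ξ := by
  refine ae_forall_eq_of_continuous (fun y => ?_) (ae_of_all _ fun ξ => ?_)
    (ae_of_all _ <| continuous_gpcExpansion fun ℓ => continuous_iff_continuousAt.2 fun y =>
      (differentiableAt_sgMassFlux M (hR · y) (hQ · y) ℓ).continuousAt)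
  · obtain ⟨a, ha⟩ := hsq y
    exact ae_eq_gpcExpansion_sgMassFlux hφ hM (.of_eq (hρ y)) (.of_eq (hq y)) ha
  · simp only [hρ, hq]
    exact (continuous_gpcExpansion (fun ℓ => (hQ ℓ).continuous) ξ).sub
      ((continuous_gpcExpansion (fun ℓ => (hR ℓ).continuous) ξ).pow 2)

lemma ae_forall_eq_gpcExpansion_sgMomentumFlux (hφ : IsGPCBasis μ w φ)
    (hM : ∀ ℓ i j, M ℓ i j = ∫ ξ, φ i ξ * φ j ξ * φ ℓ ξ * w ξ ∂μ) {ρ q : ℝ → α → ℝ}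
    {R Q : ℝ → ι → ℝ} (hρ : ∀ y, ρ y = gpcExpansion φ (R y))
    (hq : ∀ y, q y = gpcExpansion φ (Q y)) (hR : ∀ ℓ, Differentiable ℝ fun y => R y ℓ)
    (hQ : ∀ ℓ, Differentiable ℝ fun y => Q y ℓ) (hne : ∀ᵐ ξ ∂μ, ∀ y, ρ y ξ ≠ 0)
    (hP : ∀ y, IsUnit (∑ ℓ, R y ℓ • M ℓ))
    (hspan : ∀ y, ∃ b c d : ι → ℝ, (fun ξ => ρ y ξ * q y ξ) =ᵐ[μ] gpcExpansion φ b ∧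
      (fun ξ => q y ξ / ρ y ξ) =ᵐ[μ] gpcExpansion φ c ∧
      (fun ξ => q y ξ ^ 2 / ρ y ξ) =ᵐ[μ] gpcExpansion φ d) :
    ∀ᵐ ξ ∂μ, ∀ y, q y ξ ^ 2 / ρ y ξ - q y ξ * ρ y ξ
      = gpcExpansion φ (sgMomentumFlux M (R y) (Q y)) ξ := by
  refine ae_forall_eq_of_continuous (fun y => ?_) (hne.mono fun ξ hneξ => ?_)
    (ae_of_all _ <| continuous_gpcExpansion fun ℓ => continuous_iff_continuousAt.2 fun y =>
      (differentiableAt_sgMomentumFlux M (hR · y) (hQ · y) (hP y) ℓ).continuousAt)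
  · obtain ⟨b, c, d, hb, hc, hd⟩ := hspan y
    exact ae_eq_gpcExpansion_sgMomentumFlux hφ hM (.of_eq (hρ y)) (.of_eq (hq y))
      (hne.mono fun ξ h => h y) (hP y) hb hc hd
  · have hρc := continuous_gpcExpansion (φ := φ) (fun ℓ => (hR ℓ).continuous) ξ
    have hqc := continuous_gpcExpansion (φ := φ) (fun ℓ => (hQ ℓ).continuous) ξ
    simp only [hρ, hq] at hneξ ⊢
    exact ((hqc.pow 2).div hρc hneξ).sub (hqc.mul hρc)

lemma gpcCoeff_relaxation_source (hφ : IsGPCBasis μ w φ)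
    (hM : ∀ ℓ i j, M ℓ i j = ∫ ξ, φ i ξ * φ j ξ * φ ℓ ξ * w ξ ∂μ) {v : α → ℝ} {V : ι → ℝ}
    (hρ : ρ =ᵐ[μ] gpcExpansion φ R) (hq : q =ᵐ[μ] gpcExpansion φ Q)
    (hv : v =ᵐ[μ] gpcExpansion φ V) (i : ι) :
    gpcCoeff μ w φ (fun ξ => ρ ξ * v ξ + ρ ξ ^ 2 - q ξ) i
      = ((∑ ℓ, V ℓ • M ℓ) *ᵥ R) i + ((∑ ℓ, R ℓ • M ℓ) *ᵥ R) i - Q i := by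
  have h1 := integrable_mul_mul_basis_of_ae_eq hφ.integrable_triple hρ hv i
  have h2 := integrable_mul_mul_basis_of_ae_eq hφ.integrable_triple hρ hρ i
  have h3 := integrable_mul_basis_of_ae_eq hφ hq i
  calc gpcCoeff μ w φ (fun ξ => ρ ξ * v ξ + ρ ξ ^ 2 - q ξ) i
      = gpcCoeff μ w φ (fun ξ => ρ ξ * v ξ) i + gpcCoeff μ w φ (fun ξ => ρ ξ * ρ ξ) i
          - gpcCoeff μ w φ q i := by
        simp only [gpcCoeff]
        rw [← integral_add h1 h2, ← integral_sub (h1.fun_add h2) h3]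
        congr 1
        funext ξ
        ring
    _ = _ := by
        rw [gpcCoeff_mul_of_ae_eq hφ.integrable_triple hM hρ hv,
          gpcCoeff_mul_of_ae_eq hφ.integrable_triple hM hρ hρ, gpcCoeff_of_ae_eq hφ hq]

lemma deriv_add_deriv_eq_gpcCoeff (hφ : IsGPCBasis μ w φ) {U F : ℝ → ι → ℝ}
    {u flux : ℝ → α → ℝ} {S : α → ℝ} {t x : ℝ}
    (hU : ∀ ℓ, DifferentiableAt ℝ (fun s => U s ℓ) t)
    (hF : ∀ ℓ, DifferentiableAt ℝ (fun y => F y ℓ) x)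
    (hu : ∀ᵐ ξ ∂μ, ∀ s, u s ξ = gpcExpansion φ (U s) ξ)
    (hflux : ∀ᵐ ξ ∂μ, ∀ y, flux y ξ = gpcExpansion φ (F y) ξ)
    (hlaw : ∀ᵐ ξ ∂μ, deriv (fun s => u s ξ) t + deriv (fun y => flux y ξ) x = S ξ) (i : ι) :
    deriv (fun s => U s i) t + deriv (fun y => F y i) x = gpcCoeff μ w φ S i := by
  have hS : S =ᵐ[μ] gpcExpansion φ
      ((fun ℓ => deriv (fun s => U s ℓ) t) + fun ℓ => deriv (fun y => F y ℓ) x) := by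
    filter_upwards [hu, hflux, hlaw] with ξ huξ hfluxξ hlawξ
    rw [← hlawξ, funext huξ, funext hfluxξ, deriv_gpcExpansion hU, deriv_gpcExpansion hF,
      gpcExpansion_add]
  rw [gpcCoeff_of_ae_eq hφ hS, Pi.add_apply]

end Galerkin

theorem random_arz_coefficients_solve_sg_arz_general
    (K : ℕ) (ε : ℝ)
    (Ω : Set ℝ) (hΩ : MeasurableSet Ω)
    -- probability density f_Ξ on Ω
    (fΞ : ℝ → ℝ) (hfΞ : ∀ ξ ∈ Ω, 0 ≤ fΞ ξ)
    -- orthonormal basis functions with integrable triple products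
    (φ : Fin (K + 1) → ℝ → ℝ)
    (horth : ∀ i j, ∫ ξ in Ω, φ i ξ * φ j ξ * fΞ ξ = if i = j then (1 : ℝ) else 0)
    (htriple : ∀ i j ℓ, IntegrableOn (fun ξ => φ i ξ * φ j ξ * φ ℓ ξ * fΞ ξ) Ω)
    -- the matrices M_ℓ defining P(ũ) = ∑ ũ_ℓ M_ℓ
    (Mmat : Fin (K + 1) → Matrix (Fin (K + 1)) (Fin (K + 1)) ℝ)
    (hMmat : ∀ ℓ i j, Mmat ℓ i j = ∫ ξ in Ω, φ i ξ * φ j ξ * φ ℓ ξ * fΞ ξ)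
    -- equilibrium velocity
    (Veq : ℝ → ℝ)
    -- C¹ coefficient functions ρ̃, q̃ and coefficients Ṽ of V_eq(ρ)
    (ρt qt Vt : ℝ → ℝ → Fin (K + 1) → ℝ)
    (hρC1 : ∀ i, ContDiff ℝ 1 (fun p : ℝ × ℝ => ρt p.1 p.2 i))
    (hqC1 : ∀ i, ContDiff ℝ 1 (fun p : ℝ × ℝ => qt p.1 p.2 i))
    -- the random fields ρ and q
    (ρf qf : ℝ → ℝ → ℝ → ℝ)
    (hρf : ∀ t x ξ, ρf t x ξ = ∑ i, ρt t x i * φ i ξ)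
    (hqf : ∀ t x ξ, qf t x ξ = ∑ i, qt t x i * φ i ξ)
    -- (i) for a.e. ξ: (ρ,q)(·,·,ξ) solves the ARZ system with h(ρ)=ρ, and ρ ≠ 0
    (hae : ∀ᵐ ξ ∂(volume.restrict Ω), ∀ t x : ℝ,
      ρf t x ξ ≠ 0 ∧
      deriv (fun s => ρf s x ξ) t
        + deriv (fun y => qf t y ξ - (ρf t y ξ) ^ 2) x = 0 ∧
      deriv (fun s => qf s x ξ) t
        + deriv (fun y =>
            (qf t y ξ) ^ 2 / ρf t y ξ - qf t y ξ * ρf t y ξ) x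
        = (1 / ε) * (ρf t x ξ * Veq (ρf t x ξ)
            + (ρf t x ξ) ^ 2 - qf t x ξ))
    -- (ii) span hypotheses: ρ², ρq, q/ρ, q²/ρ and V_eq(ρ) lie in span{φ_0,…,φ_K}
    (hVspan : ∀ t x, ∀ᵐ ξ ∂(volume.restrict Ω),
      Veq (ρf t x ξ) = ∑ ℓ, Vt t x ℓ * φ ℓ ξ)
    (hspan : ∀ t x, ∃ a b c d : Fin (K + 1) → ℝ,
      ∀ᵐ ξ ∂(volume.restrict Ω),
        (ρf t x ξ) ^ 2 = ∑ ℓ, a ℓ * φ ℓ ξ ∧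
        ρf t x ξ * qf t x ξ = ∑ ℓ, b ℓ * φ ℓ ξ ∧
        qf t x ξ / ρf t x ξ = ∑ ℓ, c ℓ * φ ℓ ξ ∧
        (qf t x ξ) ^ 2 / ρf t x ξ = ∑ ℓ, d ℓ * φ ℓ ξ)
    -- (iii) P(ρ̃(t,x)) is invertible
    (hinv : ∀ t x, IsUnit (∑ ℓ, ρt t x ℓ • Mmat ℓ)) :
    ∀ t x i,
      (deriv (fun s => ρt s x i) t
        + deriv (fun y => qt t y i
            - (∑ ℓ, ρt t y ℓ • Mmat ℓ).mulVec (ρt t y) i) x = 0) ∧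
      (deriv (fun s => qt s x i) t
        + deriv (fun y =>
            ((∑ ℓ, qt t y ℓ • Mmat ℓ)
              * (∑ ℓ, ρt t y ℓ • Mmat ℓ)⁻¹).mulVec (qt t y) i
            - (∑ ℓ, ρt t y ℓ • Mmat ℓ).mulVec (qt t y) i) x
        = (1 / ε) * ((∑ ℓ, Vt t x ℓ • Mmat ℓ).mulVec (ρt t x) i
            + (∑ ℓ, ρt t x ℓ • Mmat ℓ).mulVec (ρt t x) i - qt t x i)) := by
  intro t x i
  have hφ : IsGPCBasis (volume.restrict Ω) fΞ φ :=
    ⟨ae_restrict_of_forall_mem hΩ hfΞ, horth, htriple⟩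
  have hρ t x : ρf t x = gpcExpansion φ (ρt t x) := funext (hρf t x)
  have hq t x : qf t x = gpcExpansion φ (qt t x) := funext (hqf t x)
  have hρy ℓ : Differentiable ℝ fun y => ρt t y ℓ :=
    ((hρC1 ℓ).differentiable one_ne_zero).comp ((differentiable_const t).prodMk differentiable_id)
  have hqy ℓ : Differentiable ℝ fun y => qt t y ℓ :=
    ((hqC1 ℓ).differentiable one_ne_zero).comp ((differentiable_const t).prodMk differentiable_id)
  have hρs ℓ : Differentiable ℝ fun s => ρt s x ℓ :=
    ((hρC1 ℓ).differentiable one_ne_zero).comp (differentiable_id.prodMk (differentiable_const x))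
  have hqs ℓ : Differentiable ℝ fun s => qt s x ℓ :=
    ((hqC1 ℓ).differentiable one_ne_zero).comp (differentiable_id.prodMk (differentiable_const x))
  have hmass := ae_forall_eq_gpcExpansion_sgMassFlux hφ hMmat (hρ t) (hq t) hρy hqy
    fun y => let ⟨a, _, _, _, h⟩ := hspan t y; ⟨a, h.mono fun _ h => h.1⟩
  have hmom := ae_forall_eq_gpcExpansion_sgMomentumFlux hφ hMmat (hρ t) (hq t) hρy hqy
    (hae.mono fun _ h y => (h t y).1) (hinv t) fun y => let ⟨_, b, c, d, h⟩ := hspan t y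
      ⟨b, c, d, h.mono fun _ h => h.2.1, h.mono fun _ h => h.2.2.1, h.mono fun _ h => h.2.2.2⟩
  constructor
  · refine (deriv_add_deriv_eq_gpcCoeff hφ (hρs · t)
      (differentiableAt_sgMassFlux Mmat (hρy · x) (hqy · x)) (ae_of_all _ fun ξ s => hρf s x ξ)
      hmass (hae.mono fun _ h => (h t x).2.1) i).trans ?_
    simp [gpcCoeff]
  · refine (deriv_add_deriv_eq_gpcCoeff hφ (hqs · t)
      (differentiableAt_sgMomentumFlux Mmat (hρy · x) (hqy · x) (hinv t x))
      (ae_of_all _ fun ξ s => hqf s x ξ) hmom (hae.mono fun _ h => (h t x).2.2) i).trans ?_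
    rw [gpcCoeff_const_mul, gpcCoeff_relaxation_source hφ hMmat (.of_eq (hρ t x))
      (.of_eq (hq t x)) (hVspan t x)]

/-- consistency part of Theorem 1: if the random fields
`ρ(t,x,ξ) = ∑ ρ̃_i(t,x)φ_i(ξ)`, `q(t,x,ξ) = ∑ q̃_i(t,x)φ_i(ξ)` solve the random
Aw–Rascle–Zhang system (with hesitation `h(ρ) = ρ`) pointwise a.e. in `ξ`, and
all the nonlinear terms lie in the span of the basis, then the coefficient
functions `(ρ̃, q̃)` solve the stochastic-Galerkin Aw–Rascle–Zhang system. -/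
theorem random_arz_coefficients_solve_sg_arz
    (K : ℕ) (ε : ℝ) (hε : 0 < ε)
    (Ω : Set ℝ) (hΩ : MeasurableSet Ω)
    -- probability density f_Ξ on Ω
    (fΞ : ℝ → ℝ) (hfΞ : ∀ ξ ∈ Ω, 0 ≤ fΞ ξ) (hprob : ∫ ξ in Ω, fΞ ξ = 1)
    -- orthonormal basis functions with integrable triple products
    (φ : Fin (K + 1) → ℝ → ℝ)
    (horth : ∀ i j, ∫ ξ in Ω, φ i ξ * φ j ξ * fΞ ξ = if i = j then (1 : ℝ) else 0)
    (htriple : ∀ i j ℓ, IntegrableOn (fun ξ => φ i ξ * φ j ξ * φ ℓ ξ * fΞ ξ) Ω)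
    -- the matrices M_ℓ defining P(ũ) = ∑ ũ_ℓ M_ℓ
    (Mmat : Fin (K + 1) → Matrix (Fin (K + 1)) (Fin (K + 1)) ℝ)
    (hMmat : ∀ ℓ i j, Mmat ℓ i j = ∫ ξ in Ω, φ i ξ * φ j ξ * φ ℓ ξ * fΞ ξ)
    -- equilibrium velocity
    (Veq : ℝ → ℝ)
    -- C¹ coefficient functions ρ̃, q̃ and coefficients Ṽ of V_eq(ρ)
    (ρt qt Vt : ℝ → ℝ → Fin (K + 1) → ℝ)
    (hρC1 : ∀ i, ContDiff ℝ 1 (fun p : ℝ × ℝ => ρt p.1 p.2 i))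
    (hqC1 : ∀ i, ContDiff ℝ 1 (fun p : ℝ × ℝ => qt p.1 p.2 i))
    -- the random fields ρ and q
    (ρf qf : ℝ → ℝ → ℝ → ℝ)
    (hρf : ∀ t x ξ, ρf t x ξ = ∑ i, ρt t x i * φ i ξ)
    (hqf : ∀ t x ξ, qf t x ξ = ∑ i, qt t x i * φ i ξ)
    -- (i) for a.e. ξ: (ρ,q)(·,·,ξ) solves the ARZ system with h(ρ)=ρ, and ρ ≠ 0
    (hae : ∀ᵐ ξ ∂(volume.restrict Ω), ∀ t x : ℝ,
      ρf t x ξ ≠ 0 ∧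
      deriv (fun s => ρf s x ξ) t
        + deriv (fun y => qf t y ξ - (ρf t y ξ) ^ 2) x = 0 ∧
      deriv (fun s => qf s x ξ) t
        + deriv (fun y =>
            (qf t y ξ) ^ 2 / ρf t y ξ - qf t y ξ * ρf t y ξ) x
        = (1 / ε) * (ρf t x ξ * Veq (ρf t x ξ)
            + (ρf t x ξ) ^ 2 - qf t x ξ))
    -- (ii) span hypotheses: ρ², ρq, q/ρ, q²/ρ and V_eq(ρ) lie in span{φ_0,…,φ_K}
    (hVspan : ∀ t x, ∀ᵐ ξ ∂(volume.restrict Ω),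
      Veq (ρf t x ξ) = ∑ ℓ, Vt t x ℓ * φ ℓ ξ)
    (hspan : ∀ t x, ∃ a b c d : Fin (K + 1) → ℝ,
      ∀ᵐ ξ ∂(volume.restrict Ω),
        (ρf t x ξ) ^ 2 = ∑ ℓ, a ℓ * φ ℓ ξ ∧
        ρf t x ξ * qf t x ξ = ∑ ℓ, b ℓ * φ ℓ ξ ∧
        qf t x ξ / ρf t x ξ = ∑ ℓ, c ℓ * φ ℓ ξ ∧
        (qf t x ξ) ^ 2 / ρf t x ξ = ∑ ℓ, d ℓ * φ ℓ ξ)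
    -- (iii) P(ρ̃(t,x)) is invertible
    (hinv : ∀ t x, IsUnit (∑ ℓ, ρt t x ℓ • Mmat ℓ)) :
    ∀ t x i,
      (deriv (fun s => ρt s x i) t
        + deriv (fun y => qt t y i
            - (∑ ℓ, ρt t y ℓ • Mmat ℓ).mulVec (ρt t y) i) x = 0) ∧
      (deriv (fun s => qt s x i) t
        + deriv (fun y =>
            ((∑ ℓ, qt t y ℓ • Mmat ℓ)
              * (∑ ℓ, ρt t y ℓ • Mmat ℓ)⁻¹).mulVec (qt t y) i
            - (∑ ℓ, ρt t y ℓ • Mmat ℓ).mulVec (qt t y) i) x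
        = (1 / ε) * ((∑ ℓ, Vt t x ℓ • Mmat ℓ).mulVec (ρt t x) i
            + (∑ ℓ, ρt t x ℓ • Mmat ℓ).mulVec (ρt t x) i - qt t x i)) :=
  random_arz_coefficients_solve_sg_arz_general K ε Ω hΩ fΞ hfΞ φ horth htriple Mmat hMmat Veq ρt qt
    Vt hρC1 hqC1 ρf qf hρf hqf hae hVspan hspan hinv
end
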